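/- arXiv:math/9905093 — 7 statements merged into one kernel-verified Lean document; each statement's English description precedes it below -/
import Mathlib

section
/- Let q be a complex number with 0 < |q| < 1 and let f(w) = Σ c_{m,n} w^m q^{nw} be a finite linear combination of the functions w^m q^{nw} (m ∈ ℕ, n ∈ ℤ). If there is an integer K such that f(k) = 0 for every integer k ≥ K, then f(w) = 0 for all w ∈ ℂ (equivalently, all coefficients c_{m,n} vanish). (Interpolation property of A₀-functions, Proposition 3.1.) -/
/-!
On the integers `k ≥ 0` the basis functions of `A₀` become the sequences `k ^ m * (q ^ n) ^ k`,
and since `0 < ‖q‖ < 1` these are totally ordered by decay rate: a smaller `n` always wins,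
and for equal `n` a larger `m` wins. If a finite combination with some nonzero coefficient
vanished for all large `k`, its slowest-decaying nonzero summand would equal minus the sum of
the others and hence be `o` of itself, which is absurd.
-/

/-- `f` belongs to the algebra `A₀` of entire functions spanned by
`w ↦ w^m * q^(n*w)` for `m ∈ ℕ`, `n ∈ ℤ`, where `q^w = exp (w * Log q)`
with the principal branch of the logarithm. -/
def IsA0 (q : ℂ) (f : ℂ → ℂ) : Prop :=
  ∃ (s : Finset (ℕ × ℤ)) (c : ℕ × ℤ → ℂ),
    ∀ w : ℂ, f w = ∑ p ∈ s, c p * w ^ p.1 * Complex.exp ((p.2 : ℂ) * Complex.log q * w)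

open Filter Asymptotics

section GrowthOrder

variable {𝕜 : Type*} [RCLike 𝕜]

theorem isLittleO_natCast_pow_mul_pow_of_lt (a : 𝕜) {m m₀ : ℕ} (h : m < m₀) :
    (fun k : ℕ => (k : 𝕜) ^ m * a ^ k) =o[atTop] fun k => (k : 𝕜) ^ m₀ * a ^ k := by
  have hreal : (fun k : ℕ => (k : ℝ) ^ m) =o[atTop] fun k => (k : ℝ) ^ m₀ :=
    (isLittleO_pow_pow_atTop_of_lt h).comp_tendsto tendsto_natCast_atTop_atTop
  have hpow : (fun k : ℕ => (k : 𝕜) ^ m) =o[atTop] fun k => (k : 𝕜) ^ m₀ := by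
    rw [← isLittleO_norm_norm]
    simpa only [norm_pow, RCLike.norm_natCast, Real.norm_eq_abs, abs_pow, Nat.abs_cast]
      using hreal.norm_norm
  exact hpow.mul_isBigO (isBigO_refl _ _)

theorem isLittleO_natCast_pow_mul_pow_of_norm_lt {a b : 𝕜} (hab : ‖a‖ < ‖b‖) (m m₀ : ℕ) :
    (fun k : ℕ => (k : 𝕜) ^ m * a ^ k) =o[atTop] fun k => (k : 𝕜) ^ m₀ * b ^ k := by
  refine (isLittleO_pow_const_mul_const_pow_const_pow_of_norm_lt (R := 𝕜) m hab).trans_isBigO ?_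
  refine IsBigO.of_bound' ?_
  filter_upwards [eventually_ge_atTop 1] with k hk
  rw [norm_mul, norm_pow, norm_pow, norm_pow, norm_norm, RCLike.norm_natCast]
  exact le_mul_of_one_le_left (by positivity) (one_le_pow₀ (by exact_mod_cast hk : (1 : ℝ) ≤ k))

/-- Orders the sequences `k ↦ k ^ m * (ρ ^ n) ^ k` (for `0 < ‖ρ‖ < 1`) by decay rate:
smaller `n` first, then larger `m`. -/
def growthKey (p : ℕ × ℤ) : ℤ ×ₗ ℕᵒᵈ :=
  toLex (p.2, OrderDual.toDual p.1)

theorem growthKey_injective : Function.Injective growthKey := by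
  intro p p' h
  simp only [growthKey, toLex_inj, Prod.mk.injEq, OrderDual.toDual_inj] at h
  exact Prod.ext h.2 h.1

theorem isLittleO_of_growthKey_lt {ρ : 𝕜} (hρ0 : ρ ≠ 0) (hρ1 : ‖ρ‖ < 1) {p p₀ : ℕ × ℤ}
    (h : growthKey p₀ < growthKey p) :
    (fun k : ℕ => (k : 𝕜) ^ p.1 * (ρ ^ p.2) ^ k) =o[atTop]
      fun k => (k : 𝕜) ^ p₀.1 * (ρ ^ p₀.2) ^ k := by
  rcases Prod.Lex.toLex_lt_toLex.mp h with hn | ⟨hn, hm⟩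
  · refine isLittleO_natCast_pow_mul_pow_of_norm_lt ?_ _ _
    rw [norm_zpow, norm_zpow]
    exact zpow_lt_zpow_right_of_lt_one₀ (norm_pos_iff.mpr hρ0) hρ1 hn
  · simp only [OrderDual.toDual_lt_toDual] at hn hm
    rw [← hn]
    exact isLittleO_natCast_pow_mul_pow_of_lt _ hm

theorem eq_zero_of_eventually_sum_natCast_pow_mul_zpow_pow {ρ : 𝕜} (hρ0 : ρ ≠ 0)
    (hρ1 : ‖ρ‖ < 1) {s : Finset (ℕ × ℤ)} {c : ℕ × ℤ → 𝕜}
    (h : ∀ᶠ k : ℕ in atTop, ∑ p ∈ s, c p * ((k : 𝕜) ^ p.1 * (ρ ^ p.2) ^ k) = 0) :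
    ∀ p ∈ s, c p = 0 := by
  set g : ℕ × ℤ → ℕ → 𝕜 := fun p k => (k : 𝕜) ^ p.1 * (ρ ^ p.2) ^ k
  by_contra! hne
  set t := s.filter (c · ≠ 0)
  obtain ⟨p₀, hp₀t, hp₀min⟩ :=
    t.exists_min_image growthKey (by simpa [t, Finset.Nonempty] using hne)
  have hcp₀ : c p₀ ≠ 0 := (Finset.mem_filter.mp hp₀t).2
  have hsum : ∀ᶠ k in atTop, c p₀ * g p₀ k = -∑ p ∈ t.erase p₀, c p * g p k := by
    filter_upwards [h] with k hk
    rw [← Finset.sum_filter_of_ne fun p _ hp => left_ne_zero_of_mul hp,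
      ← Finset.add_sum_erase t _ hp₀t] at hk
    exact eq_neg_of_add_eq_zero_left hk
  have hrest : (fun k => ∑ p ∈ t.erase p₀, c p * g p k) =o[atTop] g p₀ := by
    refine IsLittleO.fun_sum fun p hp => (isLittleO_of_growthKey_lt hρ0 hρ1 ?_).const_mul_left _
    obtain ⟨hpp₀, hpt⟩ := Finset.mem_erase.mp hp
    exact (hp₀min p hpt).lt_of_ne (growthKey_injective.ne hpp₀.symm)
  have hself : (fun k => c p₀ * g p₀ k) =o[atTop] g p₀ :=
    hrest.neg_left.congr' (hsum.mono fun _ hk => hk.symm) EventuallyEq.rfl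
  refine isLittleO_irrefl ?_ ((isLittleO_const_mul_left_iff hcp₀).mp hself)
  refine (eventually_ge_atTop 1).frequently.mono fun k hk => mul_ne_zero ?_ ?_
  · exact pow_ne_zero _ (Nat.cast_ne_zero.mpr (by omega))
  · exact pow_ne_zero _ (zpow_ne_zero _ hρ0)

end GrowthOrder

theorem Complex.exp_intCast_mul_log_mul_natCast {q : ℂ} (hq : q ≠ 0) (n : ℤ) (k : ℕ) :
    exp (n * log q * k) = (q ^ n) ^ k := by
  have harg : (n : ℂ) * log q * k = ((n * k : ℤ) : ℂ) * log q := by push_cast; ring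
  rw [harg, exp_int_mul, exp_log hq, zpow_mul, zpow_natCast]

/-- Interpolation property of `A₀`-functions: if `f ∈ A₀` vanishes at all
sufficiently large integers, then `f` vanishes identically. -/
theorem A0_interpolation (q : ℂ) (hq0 : 0 < ‖q‖) (hq1 : ‖q‖ < 1)
    (f : ℂ → ℂ) (hf : IsA0 q f)
    (K : ℤ) (hK : ∀ k : ℤ, K ≤ k → f (k : ℂ) = 0) :
    ∀ w : ℂ, f w = 0 := by
  obtain ⟨s, c, hf⟩ := hf
  have hq : q ≠ 0 := norm_pos_iff.mp hq0
  have hc : ∀ p ∈ s, c p = 0 := by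
    refine eq_zero_of_eventually_sum_natCast_pow_mul_zpow_pow hq hq1 ?_
    filter_upwards [eventually_ge_atTop K.toNat] with k hk
    have hk := hK k (by omega)
    rw [hf] at hk
    simp only [Int.cast_natCast, Complex.exp_intCast_mul_log_mul_natCast hq] at hk
    simpa only [mul_assoc] using hk
  intro w
  rw [hf]
  exact Finset.sum_eq_zero fun p hp => by rw [hc p hp, zero_mul, zero_mul]
end

section
/- Let f : ℂ × ℂ → ℂ be a function such that for every fixed t ∈ ℂ the function w ↦ f(w,t) belongs to A₀, and for every fixed w ∈ ℂ the function t ↦ f(w,t) belongs to A₀. Then f is an A₀-function of two variables, i.e. there exist finitely many g₁,…,g_N, h₁,…,h_N ∈ A₀ with f(w,t) = Σ_{i=1}^{N} g_i(w) h_i(t). (Proposition 3.3.) -/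
open Submodule Set Filter

theorem LinearIndependent.exists_finsupp_sum_eval_eq_single {K X ι : Type*} [Field K] [Finite ι]
    [DecidableEq ι] {b : ι → X → K} (hb : LinearIndependent K b) (i : ι) :
    ∃ a : X →₀ K, ∀ j, (a.sum fun x r => r * b j x) = (Pi.single i 1 : ι → K) j := by
  have hmem : Pi.single i 1 ∈ span K (range (flip b)) := by
    rw [span_flip_eq_top_iff_linearIndependent.2 hb]
    exact mem_top
  obtain ⟨a, ha⟩ := Finsupp.mem_span_range_iff_exists_finsupp.1 hmem
  refine ⟨a, fun j => ?_⟩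
  rw [← ha, Finsupp.sum, Finsupp.sum, Finset.sum_apply]
  rfl

theorem Submodule.exists_eq_sum_eval_smul {K X : Type*} [Field K] (V : Submodule K (X → K))
    [FiniteDimensional K V] :
    ∃ (d : ℕ) (b : Fin d → X → K) (a : Fin d → X →₀ K), (∀ i, b i ∈ V) ∧
      ∀ v ∈ V, v = ∑ i, (a i).sum (fun x r => r * v x) • b i := by
  classical
  let e := Module.finBasis K V
  have hli : LinearIndependent K fun i => (e i : X → K) :=
    e.linearIndependent.map' V.subtype V.ker_subtype
  choose a ha using LinearIndependent.exists_finsupp_sum_eval_eq_single hli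
  refine ⟨_, fun i => e i, a, fun i => (e i).2, fun v hvV => ?_⟩
  set c := e.repr ⟨v, hvV⟩
  have hv : v = ∑ j, c j • (e j : X → K) := by
    have := congrArg Subtype.val (e.sum_repr ⟨v, hvV⟩)
    rw [Submodule.coe_sum] at this
    exact this.symm
  have hcoord : ∀ i, ((a i).sum fun x r => r * v x) = c i := by
    intro i
    calc ((a i).sum fun x r => r * v x)
        = ∑ j, c j * (a i).sum (fun x r => r * (e j : X → K) x) := by
          rw [hv]
          simp only [Finsupp.sum, Finset.sum_apply, Pi.smul_apply, smul_eq_mul, Finset.mul_sum]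
          rw [Finset.sum_comm]
          exact Finset.sum_congr rfl fun _ _ => Finset.sum_congr rfl fun _ _ => by ring
      _ = c i := by simp [ha, Pi.single_apply, mul_ite]
  conv_lhs => rw [hv]
  simp only [hcoord]

theorem exists_not_countable_of_forall_mem {X ι : Type*} [Uncountable X] [Countable ι]
    {T : ι → Set X} (hT : ∀ x, ∃ i, x ∈ T i) : ∃ i, ¬ (T i).Countable := by
  by_contra! h
  have hcover : (univ : Set X) ⊆ ⋃ i, T i := fun x _ => mem_iUnion.2 (hT x)
  exact not_countable (countable_univ_iff.1 ((countable_iUnion h).mono hcover))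

theorem exists_accPt_of_not_countable {X : Type*} [TopologicalSpace X] [HereditarilyLindelofSpace X]
    {S : Set X} (hS : ¬ S.Countable) : ∃ x ∈ S, AccPt x (𝓟 S) := by
  by_contra! h
  exact hS ((HereditarilyLindelofSpace.isLindelof S).countable (discreteTopology_of_noAccPts h))

theorem Differentiable.eq_of_eqOn_of_accPt {f g : ℂ → ℂ} {S : Set ℂ} {z : ℂ}
    (hf : Differentiable ℂ f) (hg : Differentiable ℂ g) (hz : AccPt z (𝓟 S)) (hfg : EqOn f g S) :
    f = g :=
  AnalyticOnNhd.eq_of_frequently_eq (fun x _ => hf.analyticAt x) (fun x _ => hg.analyticAt x)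
    ((accPt_iff_frequently_nhdsNE.1 hz).mono hfg)

noncomputable def a0Monomial (q : ℂ) (p : ℕ × ℤ) (w : ℂ) : ℂ :=
  w ^ p.1 * Complex.exp ((p.2 : ℂ) * Complex.log q * w)

theorem IsA0.exists_mem_span_image {q : ℂ} {f : ℂ → ℂ} (hf : IsA0 q f) :
    ∃ s : Finset (ℕ × ℤ), f ∈ span ℂ (a0Monomial q '' s) := by
  obtain ⟨s, c, hc⟩ := hf
  have hf : f = ∑ p ∈ s, c p • a0Monomial q p := by
    funext w
    simp [hc w, a0Monomial, mul_assoc]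
  exact ⟨s, hf ▸ sum_mem fun p hp => smul_mem _ _ (subset_span ⟨p, hp, rfl⟩)⟩

theorem isA0_iff_mem_span {q : ℂ} {f : ℂ → ℂ} :
    IsA0 q f ↔ f ∈ span ℂ (range (a0Monomial q)) := by
  refine ⟨fun hf => ?_, fun hf => ?_⟩
  · obtain ⟨s, hs⟩ := hf.exists_mem_span_image
    exact span_mono (image_subset_range _ _) hs
  · obtain ⟨c, hc⟩ := Finsupp.mem_span_range_iff_exists_finsupp.1 hf
    refine ⟨c.support, c, fun w => ?_⟩
    simp [← hc, Finsupp.sum, a0Monomial, mul_assoc]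

theorem isA0_sum_mul {q : ℂ} {ι : Type*} (s : Finset ι) (c : ι → ℂ) {F : ι → ℂ → ℂ}
    (hF : ∀ i ∈ s, IsA0 q (F i)) : IsA0 q fun t => ∑ i ∈ s, c i * F i t := by
  have hs : (fun t => ∑ i ∈ s, c i * F i t) = ∑ i ∈ s, c i • F i := by
    funext t
    simp
  rw [isA0_iff_mem_span, hs]
  exact sum_mem fun i hi => smul_mem _ _ (isA0_iff_mem_span.1 (hF i hi))

theorem IsA0.differentiable {q : ℂ} {f : ℂ → ℂ} (hf : IsA0 q f) : Differentiable ℂ f := by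
  obtain ⟨s, c, hc⟩ := hf
  rw [funext hc]
  exact Differentiable.fun_sum fun p _ =>
    ((differentiable_const _).mul (differentiable_pow _)).mul
      ((differentiable_id.const_mul _).cexp)

theorem A0_two_variables_general (q : ℂ)
    (f : ℂ → ℂ → ℂ)
    (h1 : ∀ t : ℂ, IsA0 q (fun w => f w t))
    (h2 : ∀ w : ℂ, IsA0 q (fun t => f w t)) :
    ∃ (N : ℕ) (g h : Fin N → ℂ → ℂ),
      (∀ i, IsA0 q (g i)) ∧ (∀ i, IsA0 q (h i)) ∧
      ∀ w t : ℂ, f w t = ∑ i, g i w * h i t := by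
  have : Uncountable ℂ := Complex.ofReal_injective.uncountable
  obtain ⟨s, hs⟩ := exists_not_countable_of_forall_mem fun t => (h1 t).exists_mem_span_image
  obtain ⟨z, -, hz⟩ := exists_accPt_of_not_countable hs
  have : FiniteDimensional ℂ (span ℂ (a0Monomial q '' s)) :=
    FiniteDimensional.span_of_finite ℂ (s.finite_toSet.image _)
  obtain ⟨N, g, a, hgV, hrepr⟩ := (span ℂ (a0Monomial q '' s)).exists_eq_sum_eval_smul
  let h : Fin N → ℂ → ℂ := fun i t => (a i).sum fun x r => r * f x t
  have hA0 : ∀ i, IsA0 q (h i) := fun i => isA0_sum_mul (a i).support (a i) fun x _ => h2 x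
  refine ⟨N, g, h, fun i => isA0_iff_mem_span.2 (span_mono (image_subset_range _ _) (hgV i)),
    hA0, fun w t => ?_⟩
  suffices hw : (fun t => f w t) = fun t => ∑ i, g i w * h i t from congrFun hw t
  refine (h2 w).differentiable.eq_of_eqOn_of_accPt
    (isA0_sum_mul _ _ fun i _ => hA0 i).differentiable hz fun t ht => ?_
  simpa [mul_comm] using congrFun (hrepr _ ht) w

/-- Proposition 3.3: a function of two complex variables which is an `A₀`-function in
each variable separately is an `A₀`-function of two variables, i.e. a finite sum
`∑ i, g i w * h i t` with `g i, h i ∈ A₀`. -/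
theorem A0_two_variables (q : ℂ) (hq0 : 0 < ‖q‖) (hq1 : ‖q‖ < 1)
    (f : ℂ → ℂ → ℂ)
    (h1 : ∀ t : ℂ, IsA0 q (fun w => f w t))
    (h2 : ∀ w : ℂ, IsA0 q (fun t => f w t)) :
    ∃ (N : ℕ) (g h : Fin N → ℂ → ℂ),
      (∀ i, IsA0 q (g i)) ∧ (∀ i, IsA0 q (h i)) ∧
      ∀ w t : ℂ, f w t = ∑ i, g i w * h i t :=
  A0_two_variables_general q f h1 h2
end

section
/- Let g(w,t) = Σ_{i=1}^{N} g_i(w) h_i(t) be an A₀-function of two variables, let l be a positive integer, and suppose there is an integer K such that g(m−l, m) = 0 for every integer m > K. Then g(w−l, w) = 0 for every w ∈ ℂ. (Key step of Proposition 3.4: vanishing of the near-diagonal values A^{(n)}(w, w+l) = 0 for matrices in gl_q.) -/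
/-!
Each element of `A₀` is `w ↦ ∑ₙ Pₙ(w) qⁿʷ` with polynomials `Pₙ`, so its values at `k ∈ ℕ` are
`∑ₙ Pₙ(k) λₙᵏ` with pairwise distinct `λₙ = qⁿ`, as `0 < |q| < 1`. For the shift `S`
of sequences, `(S - λ)^(deg P + 1)` kills `k ↦ P(k) λᵏ`, so these summands lie in generalized
eigenspaces of `S` for distinct eigenvalues, which are independent: if the values vanish on `ℕ`,
every `Pₙ` vanishes on `ℕ`, hence is zero. Since `A₀` is an algebra closed under translations,
this applies to `w ↦ f(w + K + 1 - l, w + K + 1)`.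
-/

open Polynomial Function fwdDiff Complex

section SeqShift

variable {R : Type*} [CommRing R]

variable (R) in
noncomputable def seqShift : Module.End R (ℕ → R) := LinearMap.funLeft R R (· + 1)

lemma fwdDiff_iter_comp_natCast (f : R → R) (j : ℕ) :
    (fwdDiff 1)^[j] (fun k : ℕ => f k) = fun k : ℕ => (fwdDiff 1)^[j] f (k : R) := by
  funext k
  simp [fwdDiff_iter_eq_sum_shift]

lemma seqShift_sub_smul_pow_apply (u : ℕ → R) (μ : R) (j : ℕ) :
    ((seqShift R - μ • 1) ^ j) (fun k => u k * μ ^ k) =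
      fun k => μ ^ j * (fwdDiff 1)^[j] u k * μ ^ k := by
  induction j generalizing u with
  | zero => simp
  | succ j ih =>
    rw [pow_succ, Module.End.mul_apply]
    have hstep : (seqShift R - μ • 1) (fun k => u k * μ ^ k) =
        fun k => (μ • fwdDiff 1 u) k * μ ^ k := by
      funext k
      simp only [seqShift, LinearMap.sub_apply, LinearMap.smul_apply, Module.End.one_apply,
        Pi.sub_apply, LinearMap.funLeft_apply, Pi.smul_apply, smul_eq_mul, fwdDiff]
      ring
    rw [hstep, ih, iterate_succ_apply, fwdDiff_iter_const_smul]
    funext k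
    simp only [Pi.smul_apply, smul_eq_mul]
    ring

lemma eval_mul_pow_mem_maxGenEigenspace (p : R[X]) (μ : R) :
    (fun k : ℕ => p.eval (k : R) * μ ^ k) ∈ (seqShift R).maxGenEigenspace μ := by
  refine (Module.End.mem_maxGenEigenspace _ _ _).2 ⟨p.natDegree + 1, ?_⟩
  rw [seqShift_sub_smul_pow_apply, fwdDiff_iter_comp_natCast p.eval,
    p.fwdDiff_iter_degree_add_one_eq_zero]
  simp only [Pi.zero_apply, mul_zero, zero_mul]
  rfl

end SeqShift

theorem Polynomial.eq_zero_of_forall_sum_eval_mul_pow_eq_zero {R ι : Type*} [CommRing R]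
    [IsDomain R] [CharZero R] {μ : ι → R} (hμ : Injective μ) (hμ0 : ∀ i, μ i ≠ 0)
    (s : Finset ι) (p : ι → R[X]) (h : ∀ k : ℕ, ∑ i ∈ s, (p i).eval (k : R) * μ i ^ k = 0) :
    ∀ i ∈ s, p i = 0 := by
  have hseq := (iSupIndep_iff_finsetSum_eq_zero_imp_eq_zero _).1
    (((seqShift R).independent_genEigenspace ⊤).comp hμ) s
    (fun i k => (p i).eval (k : R) * μ i ^ k)
    (fun i _ => eval_mul_pow_mem_maxGenEigenspace (p i) (μ i))
    (by ext k; simpa only [Finset.sum_apply, Pi.zero_apply] using h k)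
  intro i hi
  refine eq_zero_of_infinite_isRoot _ (Set.infinite_of_injective_forall_mem Nat.cast_injective
    fun k => ?_)
  simpa [hμ0 i] using congrFun (hseq i hi) k

section A0

variable (q : ℂ)

noncomputable def expMonomial (p : ℕ × ℤ) (w : ℂ) : ℂ :=
  w ^ p.1 * cexp (p.2 * log q * w)

noncomputable def A0 : Submodule ℂ (ℂ → ℂ) :=
  Submodule.span ℂ (Set.range (expMonomial q))

lemma expMonomial_mem_A0 (p : ℕ × ℤ) : expMonomial q p ∈ A0 q :=
  Submodule.subset_span ⟨p, rfl⟩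

lemma expMonomial_mul (p r : ℕ × ℤ) :
    expMonomial q p * expMonomial q r = expMonomial q (p + r) := by
  funext w
  simp only [expMonomial, Pi.mul_apply, Prod.fst_add, Prod.snd_add, pow_add, Int.cast_add,
    add_mul, Complex.exp_add]
  ring

variable {q}

lemma A0_mul_mem {f g : ℂ → ℂ} (hf : f ∈ A0 q) (hg : g ∈ A0 q) : f * g ∈ A0 q := by
  have hle : A0 q * A0 q ≤ A0 q := by
    rw [A0, Submodule.span_mul_span]
    refine Submodule.span_le.2 ?_
    rintro _ ⟨_, ⟨p, rfl⟩, _, ⟨r, rfl⟩, rfl⟩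
    exact Submodule.subset_span ⟨p + r, (expMonomial_mul q p r).symm⟩
  exact hle (Submodule.mul_mem_mul hf hg)

lemma A0_comp_add_mem (a : ℂ) {f : ℂ → ℂ} (hf : f ∈ A0 q) : (fun w => f (w + a)) ∈ A0 q := by
  refine (Submodule.map_span_le (LinearMap.funLeft ℂ ℂ (· + a)) _ _).2 ?_
    (Submodule.mem_map_of_mem hf)
  rintro _ ⟨⟨m, n⟩, rfl⟩
  induction m with
  | zero =>
    convert (A0 q).smul_mem (cexp (n * log q * a)) (expMonomial_mem_A0 q (0, n)) using 1
    funext w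
    simp only [LinearMap.funLeft_apply, expMonomial, Pi.smul_apply, smul_eq_mul, mul_add,
      Complex.exp_add]
    ring
  | succ m ih =>
    have hlin : expMonomial q (1, 0) + a • expMonomial q (0, 0) ∈ A0 q :=
      (A0 q).add_mem (expMonomial_mem_A0 q _) ((A0 q).smul_mem a (expMonomial_mem_A0 q _))
    convert A0_mul_mem hlin ih using 1
    funext w
    simp only [LinearMap.funLeft_apply, expMonomial, Pi.add_apply, Pi.mul_apply, Pi.smul_apply,
      smul_eq_mul, pow_one, pow_zero, Int.cast_zero, zero_mul, exp_zero, mul_one]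
    ring

lemma IsA0.mem_A0 {f : ℂ → ℂ} (hf : IsA0 q f) : f ∈ A0 q := by
  obtain ⟨s, c, hc⟩ := hf
  have hrep : f = ∑ p ∈ s, c p • expMonomial q p := by
    funext w
    simp only [hc w, Finset.sum_apply, Pi.smul_apply, smul_eq_mul, expMonomial, mul_assoc]
  rw [hrep]
  exact Submodule.sum_mem _ fun p _ => (A0 q).smul_mem _ (expMonomial_mem_A0 q p)

variable (q) in
noncomputable def expPoly (n : ℤ) : ℂ[X] →ₗ[ℂ] ℂ → ℂ where
  toFun p w := p.eval w * cexp (n * log q * w)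
  map_add' p r := by funext w; simp only [eval_add, add_mul, Pi.add_apply]
  map_smul' c p := by funext w; simp only [eval_smul, smul_eq_mul, mul_assoc, Pi.smul_apply,
    RingHom.id_apply]

lemma A0_le_range_lsum_expPoly : A0 q ≤ LinearMap.range (Finsupp.lsum ℂ (expPoly q)) := by
  refine Submodule.span_le.2 ?_
  rintro _ ⟨⟨m, n⟩, rfl⟩
  refine ⟨Finsupp.single n (X ^ m), ?_⟩
  rw [Finsupp.lsum_single]
  funext w
  simp [expPoly, expMonomial]

lemma injective_exp_intCast_mul_log (hq0 : q ≠ 0) (hq1 : ‖q‖ ≠ 1) :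
    Injective fun n : ℤ => cexp (n * log q) := by
  have hzpow : ∀ n : ℤ, cexp (n * log q) = q ^ n := fun n => by
    rw [← cpow_intCast, cpow_def_of_ne_zero hq0, mul_comm]
  intro m n hmn
  apply zpow_right_injective₀ (norm_pos_iff.2 hq0) hq1
  simpa only [hzpow, norm_zpow] using congrArg norm hmn

theorem eq_zero_of_mem_A0_of_forall_natCast_eq_zero (hq0 : q ≠ 0) (hq1 : ‖q‖ ≠ 1)
    {f : ℂ → ℂ} (hf : f ∈ A0 q) (hvanish : ∀ k : ℕ, f k = 0) : f = 0 := by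
  obtain ⟨P, rfl⟩ := A0_le_range_lsum_expPoly hf
  have hP := eq_zero_of_forall_sum_eval_mul_pow_eq_zero (injective_exp_intCast_mul_log hq0 hq1)
    (fun n => Complex.exp_ne_zero _) P.support P fun k => by
      simpa [Finsupp.lsum_apply, Finsupp.sum, expPoly, ← Complex.exp_nat_mul, mul_comm]
        using hvanish k
  have hzero : P = 0 :=
    Finsupp.ext fun n => by_contra fun h => h (hP n (Finsupp.mem_support_iff.2 h))
  rw [hzero, map_zero]

end A0

theorem A0_near_diagonal_vanishing_general (q : ℂ) (hq0 : 0 < ‖q‖)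
    (hq1 : ‖q‖ < 1)
    (N : ℕ) (g h : Fin N → ℂ → ℂ)
    (hg : ∀ i, IsA0 q (g i)) (hh : ∀ i, IsA0 q (h i))
    (f : ℂ → ℂ → ℂ) (hf : ∀ w t : ℂ, f w t = ∑ i, g i w * h i t)
    (l : ℤ)
    (K : ℤ) (hK : ∀ m : ℤ, K < m → f ((m : ℂ) - (l : ℂ)) (m : ℂ) = 0) :
    ∀ w : ℂ, f (w - (l : ℂ)) w = 0 := by
  have hdiag : (fun w => f (w - l) w) ∈ A0 q := by
    have hrep : (fun w => f (w - l) w) = ∑ i, (fun w => g i (w - l)) * h i := by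
      funext w
      simp only [hf, Finset.sum_apply, Pi.mul_apply]
    rw [hrep]
    exact Submodule.sum_mem _ fun i _ =>
      A0_mul_mem (by simpa only [← sub_eq_add_neg] using A0_comp_add_mem (-l) (hg i).mem_A0)
        (hh i).mem_A0
  have htail := eq_zero_of_mem_A0_of_forall_natCast_eq_zero (norm_pos_iff.1 hq0) hq1.ne
    (A0_comp_add_mem ((K : ℂ) + 1) hdiag) fun k => by
      simpa [add_sub_right_comm, add_assoc] using hK (k + K + 1) (by omega)
  intro w
  simpa using congrFun htail (w - (K + 1))

/-- Key step of Proposition 3.4: if `g(w,t) = ∑ i, g i w * h i t` is an `A₀`-function of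
two variables, `l` is a positive integer, and `g(m - l, m) = 0` for all sufficiently
large integers `m`, then `g(w - l, w) = 0` for all complex `w`. -/
theorem A0_near_diagonal_vanishing (q : ℂ) (hq0 : 0 < ‖q‖)
    (hq1 : ‖q‖ < 1)
    (N : ℕ) (g h : Fin N → ℂ → ℂ)
    (hg : ∀ i, IsA0 q (g i)) (hh : ∀ i, IsA0 q (h i))
    (f : ℂ → ℂ → ℂ) (hf : ∀ w t : ℂ, f w t = ∑ i, g i w * h i t)
    (l : ℤ) (hl : 0 < l)
    (K : ℤ) (hK : ∀ m : ℤ, K < m → f ((m : ℂ) - (l : ℂ)) (m : ℂ) = 0) :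
    ∀ w : ℂ, f (w - (l : ℂ)) w = 0 :=
  A0_near_diagonal_vanishing_general q hq0 hq1 N g h hg hh f hf l K hK
end

section
/- Let n ≥ 1 be an integer, m a nonzero integer, q ∈ ℂ with 0 < |q| < 1, and ω = exp(2πi/n). Then Σ_{α=0}^{n−1} (1/n) · q^m ω^α (1 + q^m ω^α) / (1 − q^m ω^α)³ = n² q^{mn} (1 + q^{mn}) / (1 − q^{mn})³. (Lemma 2.10; note that 1 − q^m ω^α ≠ 0 and 1 − q^{mn} ≠ 0 since |q^m| ≠ 1.) -/
/-!
The summand is `n⁻¹ Li₋₂(qᵐ ωᵅ)` with `Li₋₂(x) = x(1 + x)/(1 - x)³ = ∑ k² xᵏ` for `‖x‖ < 1`.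
Summing the series over the `n`-th roots of unity keeps only the terms with `n ∣ k`, so
`∑_α Li₋₂(x ωᵅ) = n ∑_j (nj)² xⁿʲ = n³ Li₋₂(xⁿ)`. The rational identity `Li₋₂(x⁻¹) = -Li₋₂(x)`
carries this over to `‖x‖ > 1`, which covers `x = qᵐ` for negative `m`.
-/

open Finset

section

variable {K : Type*} [Field K]

def polylogNegTwo (x : K) : K := x * (1 + x) / (1 - x) ^ 3

theorem polylogNegTwo_inv (x : K) : polylogNegTwo x⁻¹ = -polylogNegTwo x := by
  unfold polylogNegTwo
  rcases eq_or_ne x 0 with rfl | hx0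
  · simp
  rcases eq_or_ne x 1 with rfl | hx1
  · simp
  field_simp
  ring

end

theorem hasSum_polylogNegTwo {𝕜 : Type*} [NormedField 𝕜] [CompleteSpace 𝕜] {x : 𝕜}
    (hx : ‖x‖ < 1) :
    HasSum (fun k : ℕ => (k : 𝕜) ^ 2 * x ^ k) (polylogNegTwo x) := by
  have h₀ := hasSum_choose_mul_geometric_of_norm_lt_one 0 hx
  have h₁ := hasSum_choose_mul_geometric_of_norm_lt_one 1 hx
  have h₂ := hasSum_choose_mul_geometric_of_norm_lt_one 2 hx
  have hx1 : 1 - x ≠ 0 := (isUnit_one_sub_of_norm_lt_one hx).ne_zero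
  -- `k² = 2 (k + 2).choose 2 - 3 (k + 1).choose 1 + k.choose 0`
  convert! ((h₂.mul_left 2).sub (h₁.mul_left 3)).add h₀ using 1
  · ext k
    have hc := congrArg (Nat.cast : ℕ → 𝕜) (Nat.add_one_mul_choose_eq (k + 1) 1)
    push_cast [Nat.choose_one_right, Nat.choose_zero_right] at hc ⊢
    linear_combination (x ^ k) * hc
  · unfold polylogNegTwo
    field_simp
    ring

theorem IsPrimitiveRoot.sum_pow_pow_eq_ite {R : Type*} [CommRing R] [IsDomain R] {ζ : R} {n : ℕ}
    (hζ : IsPrimitiveRoot ζ n) (k : ℕ) :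
    ∑ α ∈ range n, (ζ ^ α) ^ k = if n ∣ k then (n : R) else 0 := by
  simp_rw [← pow_mul, mul_comm _ k, pow_mul]
  split_ifs with hk
  · simp [(hζ.pow_eq_one_iff_dvd k).2 hk]
  · have hne : ζ ^ k ≠ 1 := mt (hζ.pow_eq_one_iff_dvd k).1 hk
    refine eq_zero_of_ne_zero_of_mul_left_eq_zero (sub_ne_zero_of_ne hne.symm) ?_
    rw [mul_neg_geom_sum, ← pow_mul, mul_comm, pow_mul, hζ.pow_eq_one, one_pow, sub_self]

theorem hasSum_ite_dvd_iff {M : Type*} [AddCommMonoid M] [TopologicalSpace M] {n : ℕ}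
    (hn : n ≠ 0) (f : ℕ → M) (a : M) :
    HasSum (fun k => if n ∣ k then f k else 0) a ↔ HasSum (fun j => f (n * j)) a := by
  rw [← (mul_right_injective₀ hn).hasSum_iff]
  · simp [Function.comp_def]
  · exact fun k hk => if_neg fun ⟨j, hj⟩ => hk ⟨j, hj.symm⟩

namespace IsPrimitiveRoot

variable {𝕜 : Type*} [NormedField 𝕜] {ζ : 𝕜} {n : ℕ}

theorem sum_polylogNegTwo_mul_pow_of_norm_lt_one [CompleteSpace 𝕜] (hζ : IsPrimitiveRoot ζ n)
    (hn : n ≠ 0) {x : 𝕜} (hx : ‖x‖ < 1) :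
    ∑ α ∈ range n, polylogNegTwo (x * ζ ^ α) = n ^ 3 * polylogNegTwo (x ^ n) := by
  have hζ1 : ‖ζ‖ = 1 :=
    (pow_eq_one_iff_of_nonneg (norm_nonneg ζ) hn).1 (by rw [← norm_pow, hζ.pow_eq_one, norm_one])
  have hsum : HasSum (fun k : ℕ => ∑ α ∈ range n, (k : 𝕜) ^ 2 * (x * ζ ^ α) ^ k)
      (∑ α ∈ range n, polylogNegTwo (x * ζ ^ α)) :=
    hasSum_sum fun α _ => hasSum_polylogNegTwo (by simpa [hζ1] using hx)
  have hfilter (k : ℕ) : ∑ α ∈ range n, (k : 𝕜) ^ 2 * (x * ζ ^ α) ^ k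
      = if n ∣ k then (n : 𝕜) * (k ^ 2 * x ^ k) else 0 := by
    calc ∑ α ∈ range n, (k : 𝕜) ^ 2 * (x * ζ ^ α) ^ k
        = k ^ 2 * x ^ k * ∑ α ∈ range n, (ζ ^ α) ^ k := by
          rw [mul_sum]
          exact sum_congr rfl fun α _ => by ring
      _ = _ := by
          rw [hζ.sum_pow_pow_eq_ite]
          split_ifs <;> ring
  have hxn : ‖x ^ n‖ < 1 := by
    rw [norm_pow]
    exact pow_lt_one₀ (norm_nonneg x) hx hn
  have hsub : HasSum (fun j : ℕ => (n : 𝕜) * ((n * j : ℕ) ^ 2 * x ^ (n * j)))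
      (n ^ 3 * polylogNegTwo (x ^ n)) := by
    convert! (hasSum_polylogNegTwo hxn).mul_left ((n : 𝕜) ^ 3) using 1
    ext j
    push_cast
    ring
  rw [funext hfilter] at hsum
  exact hsum.unique ((hasSum_ite_dvd_iff hn _ _).2 hsub)

theorem sum_polylogNegTwo_mul_pow [CompleteSpace 𝕜] (hζ : IsPrimitiveRoot ζ n)
    (hn : n ≠ 0) {x : 𝕜} (hx : ‖x‖ ≠ 1) :
    ∑ α ∈ range n, polylogNegTwo (x * ζ ^ α) = n ^ 3 * polylogNegTwo (x ^ n) := by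
  rcases hx.lt_or_gt with hx | hx
  · exact hζ.sum_polylogNegTwo_mul_pow_of_norm_lt_one hn hx
  have hx' : ‖x⁻¹‖ < 1 := by
    rw [norm_inv]
    exact inv_lt_one_of_one_lt₀ hx
  have hterm (α : ℕ) : x * ζ ^ α = (x⁻¹ * ζ⁻¹ ^ α)⁻¹ := by
    rw [mul_inv, inv_pow, inv_inv, inv_inv]
  calc ∑ α ∈ range n, polylogNegTwo (x * ζ ^ α)
      = -∑ α ∈ range n, polylogNegTwo (x⁻¹ * ζ⁻¹ ^ α) := by
        simp only [hterm, polylogNegTwo_inv, sum_neg_distrib]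
    _ = -(n ^ 3 * polylogNegTwo (x⁻¹ ^ n)) := by
        rw [hζ.inv.sum_polylogNegTwo_mul_pow_of_norm_lt_one hn hx']
    _ = n ^ 3 * polylogNegTwo (x ^ n) := by
        rw [inv_pow, polylogNegTwo_inv, mul_neg, neg_neg]

end IsPrimitiveRoot

theorem root_of_unity_sum_general (n : ℕ) (hn : 1 ≤ n) (m : ℤ) (hm : m ≠ 0)
    (q : ℂ) (hq1 : ‖q‖ < 1)
    (ω : ℂ) (hω : ω = Complex.exp (2 * Real.pi * Complex.I / (n : ℂ))) :
    ∑ α ∈ Finset.range n,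
        (n : ℂ)⁻¹ * (q ^ m * ω ^ α * (1 + q ^ m * ω ^ α)) / (1 - q ^ m * ω ^ α) ^ 3
      = (n : ℂ) ^ 2 * q ^ (m * (n : ℤ)) * (1 + q ^ (m * (n : ℤ)))
          / (1 - q ^ (m * (n : ℤ))) ^ 3 := by
  have hn0 : n ≠ 0 := Nat.one_le_iff_ne_zero.1 hn
  have hprim : IsPrimitiveRoot ω n := hω ▸ Complex.isPrimitiveRoot_exp n hn0
  have hqm : ‖q ^ m‖ ≠ 1 := by
    rwa [norm_zpow, Ne, zpow_eq_one_iff_right₀ (norm_nonneg q) hq1.ne]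
  calc ∑ α ∈ range n,
        (n : ℂ)⁻¹ * (q ^ m * ω ^ α * (1 + q ^ m * ω ^ α)) / (1 - q ^ m * ω ^ α) ^ 3
      = (n : ℂ)⁻¹ * ∑ α ∈ range n, polylogNegTwo (q ^ m * ω ^ α) := by
        simp only [polylogNegTwo, mul_sum, mul_div_assoc]
    _ = (n : ℂ)⁻¹ * (n ^ 3 * polylogNegTwo ((q ^ m) ^ n)) := by
        rw [hprim.sum_polylogNegTwo_mul_pow hn0 hqm]
    _ = _ := by
        rw [zpow_mul, zpow_natCast, polylogNegTwo]
        field_simp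

/-- Lemma 2.10: for `n ≥ 1`, `m ≠ 0`, `0 < |q| < 1` and `ω = exp(2πi/n)`,
`∑_{α=0}^{n-1} (1/n) q^m ω^α (1 + q^m ω^α)/(1 - q^m ω^α)³
  = n² q^{mn} (1 + q^{mn})/(1 - q^{mn})³`. -/
theorem root_of_unity_sum (n : ℕ) (hn : 1 ≤ n) (m : ℤ) (hm : m ≠ 0)
    (q : ℂ) (hq0 : 0 < ‖q‖) (hq1 : ‖q‖ < 1)
    (ω : ℂ) (hω : ω = Complex.exp (2 * Real.pi * Complex.I / (n : ℂ))) :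
    ∑ α ∈ Finset.range n,
        (n : ℂ)⁻¹ * (q ^ m * ω ^ α * (1 + q ^ m * ω ^ α)) / (1 - q ^ m * ω ^ α) ^ 3
      = (n : ℂ) ^ 2 * q ^ (m * (n : ℤ)) * (1 + q ^ (m * (n : ℤ)))
          / (1 - q ^ (m * (n : ℤ))) ^ 3 :=
  root_of_unity_sum_general n hn m hm q hq1 ω hω
end

section
/- Let n ≥ 1 and q ∈ ℂ with 0 < |q| < 1. Let f, g ∈ ℂ((z⁻¹)) with coefficients (f_m), (g_m), and set f₀ = Res f. Let f̄ = (f(z), f(q⁻¹z),…,f(q^{−(n−1)}z)) ∈ U_n and ḡ = (g(z), g(q⁻¹z),…,g(q^{−(n−1)}z)) ∈ U_n. Suppose G ∈ H_n satisfies (1 − ĥτ̂_n)G = f̄ − f₀·𝟙 and Σ_{j=0}^{n−1} Res G_j = 0. Then ⟨½(G + ĥτ̂_n G), ḡ⟩ = (n²/2) Σ_{m ∈ ℤ, m ≠ 0} f_m g_{−m} (1 + q^{mn})/(1 − q^{mn}), the sum on the right having only finitely many nonzero terms. (Theorem 2.4: the U_n-block of the r-matrix r̂⁰_{0,n} = ½(1+ĥτ̂_n)(1−ĥτ̂_n)⁻¹P₀′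 equals (n/2)(1+ĥⁿ)(1−ĥⁿ)⁻¹P₀′.) -/
noncomputable section

/-- Dilation operator: `(dil q k a)(z) = a(q^k z)`.
A formal Laurent series `a(z) = ∑_{m ≤ N} a_m z^m ∈ ℂ((z⁻¹))` is encoded as the
Hahn series `F : LaurentSeries ℂ` with `F.coeff j = a_{-j}` (support bounded below,
i.e. finitely many positive powers of `z`); dilation sends `a_m ↦ q^{k m} a_m`,
i.e. `coeff j ↦ q^{-(k j)} * coeff j`. -/
def dil (q : ℂ) (k : ℤ) (F : LaurentSeries ℂ) : LaurentSeries ℂ where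
  coeff := fun j => q ^ (-(k * j)) * F.coeff j
  isPWO_support' := by
    apply F.isPWO_support'.mono
    intro j hj
    simp only [Function.mem_support] at hj ⊢
    intro h
    exact hj (by rw [h, mul_zero])

/-- `Res a = a₀`, the coefficient of `z⁰`. -/
def Res (F : LaurentSeries ℂ) : ℂ := F.coeff 0

/-- The bilinear pairing `⟨F, G⟩ = ∑_j Res (F_j G_j)` on `H_n = (ℂ((z⁻¹)))^n`. -/
def pair {n : ℕ} (F G : Fin n → LaurentSeries ℂ) : ℂ := ∑ j, Res (F j * G j)

/-- The operator `ĥτ̂_n` on `H_n`: `(ĥτ̂_n F)_j (z) = F_{j+1 mod n} (q z)`. -/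
def htau (q : ℂ) {n : ℕ} [NeZero n] (F : Fin n → LaurentSeries ℂ) :
    Fin n → LaurentSeries ℂ := fun j => dil q 1 (F (j + 1))

/-- `F ∈ U_n`, i.e. `F = (u(z), u(q⁻¹ z), …, u(q^{-(n-1)} z))` for some `u ∈ ℂ((z⁻¹))`. -/
def InU (q : ℂ) {n : ℕ} (F : Fin n → LaurentSeries ℂ) : Prop :=
  ∃ u : LaurentSeries ℂ, ∀ j : Fin n, F j = dil q (-((j : ℕ) : ℤ)) u

end

/-! Fix a Hahn index `i ≠ 0`, i.e. the coefficient of `z^{-i}`, and put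
`y_k = q^{-ki} · (G_{k mod n}).coeff i`. The equation `(1 - ĥτ̂_n) G = f̄ - f₀ 𝟙` becomes
`y_k - y_{k+1} = f.coeff i` for `k < n`, while the cyclic shift gives `y_n = q^{-ni} y_0`.
So the `y_k` form an arithmetic progression with `(1 - q^{-ni}) y_0 = n · f.coeff i`, and the
contribution `½ g.coeff (-i) · ∑_{k<n} (y_k + y_{k+1})` of this index to the pairing equals
`(n²/2) f.coeff i · g.coeff (-i) · (1 + q^{-ni}) / (1 - q^{-ni})`. At `i = 0` the contribution
is `g.coeff 0 · ∑_j Res G_j = 0`.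
-/

section ArithmeticProgression

open Finset

variable {K : Type*} [CommRing K] {y : ℕ → K} {n : ℕ} {c : K}

theorem eq_sub_mul_of_sub_succ_eq (h : ∀ k < n, y k - y (k + 1) = c) :
    ∀ k ≤ n, y k = y 0 - k * c := by
  intro k hk
  induction k with
  | zero => simp
  | succ k ih =>
    have := h k hk
    rw [ih (by omega)] at this
    push_cast
    linear_combination -this

theorem sum_range_add_succ_of_sub_succ_eq (h : ∀ k < n, y k - y (k + 1) = c) :
    ∑ k ∈ range n, (y k + y (k + 1)) = 2 * n * y 0 - n ^ 2 * c := by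
  induction n with
  | zero => simp
  | succ n ih =>
    rw [sum_range_succ, ih fun k hk => h k (by omega),
      eq_sub_mul_of_sub_succ_eq h n (by omega), eq_sub_mul_of_sub_succ_eq h (n + 1) le_rfl]
    push_cast
    ring

theorem one_sub_mul_sum_range_add_succ_of_sub_succ_eq (h : ∀ k < n, y k - y (k + 1) = c) {X : K}
    (hX : y n = X * y 0) :
    (1 - X) * ∑ k ∈ range n, (y k + y (k + 1)) = n ^ 2 * c * (1 + X) := by
  rw [sum_range_add_succ_of_sub_succ_eq h]
  have := eq_sub_mul_of_sub_succ_eq h n le_rfl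
  linear_combination (2 * n) * (hX - this)

end ArithmeticProgression

namespace HahnSeries

variable {Γ R : Type*} [AddCommGroup Γ] [PartialOrder Γ] [IsOrderedAddMonoid Γ]
  [NonUnitalNonAssocSemiring R]

theorem coeff_mul_eq_finsum (x y : HahnSeries Γ R) (a : Γ) :
    (x * y).coeff a = ∑ᶠ i, x.coeff i * y.coeff (a - i) := by
  classical
  have hsupp : (Function.support fun i => x.coeff i * y.coeff (a - i)) ⊆
      ((Finset.antidiagonal x.isPWO_support y.isPWO_support a).image Prod.fst : Set Γ) :=
    fun i hi => Finset.mem_image.mpr ⟨(i, a - i), Finset.mem_antidiagonal.mpr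
      ⟨left_ne_zero_of_mul hi, right_ne_zero_of_mul hi, add_sub_cancel _ _⟩, rfl⟩
  have hsnd {ij} (hij : ij ∈ Finset.antidiagonal x.isPWO_support y.isPWO_support a) :
      ij.2 = a - ij.1 :=
    eq_sub_of_add_eq' (Finset.mem_antidiagonal.mp hij).2.2
  rw [finsum_eq_sum_of_support_subset _ hsupp, coeff_mul, Finset.sum_image]
  · exact Finset.sum_congr rfl fun ij hij => by rw [hsnd hij]
  · exact fun ij hij kl hkl h => Prod.ext h (by rw [hsnd hij, hsnd hkl, h])

theorem hasFiniteSupport_coeff_mul_coeff_sub (x y : HahnSeries Γ R) (a : Γ) :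
    Function.HasFiniteSupport fun i => x.coeff i * y.coeff (a - i) :=
  ((Set.AddAntidiagonal.finite_of_isPWO x.isPWO_support y.isPWO_support a).image
    Prod.fst).subset fun i hi => ⟨(i, a - i), ⟨left_ne_zero_of_mul hi, right_ne_zero_of_mul hi,
      add_sub_cancel _ _⟩, rfl⟩

end HahnSeries

theorem dil_coeff (q : ℂ) (k : ℤ) (F : LaurentSeries ℂ) (i : ℤ) :
    (dil q k F).coeff i = q ^ (-(k * i)) * F.coeff i := rfl

theorem htau_coeff (q : ℂ) {n : ℕ} [NeZero n] (G : Fin n → LaurentSeries ℂ) (j : Fin n) (i : ℤ) :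
    (htau q G j).coeff i = q ^ (-i) * (G (j + 1)).coeff i := by
  rw [htau, dil_coeff, one_mul]

theorem res_mul_eq_finsum (x y : LaurentSeries ℂ) :
    Res (x * y) = ∑ᶠ i, x.coeff i * y.coeff (-i) := by
  simp only [Res, HahnSeries.coeff_mul_eq_finsum, zero_sub]

theorem pair_eq_finsum_sum {n : ℕ} (F G : Fin n → LaurentSeries ℂ) :
    pair F G = ∑ᶠ i, ∑ j, (F j).coeff i * (G j).coeff (-i) := by
  simp only [pair, res_mul_eq_finsum]
  exact (finsum_sum_comm _ _ fun j _ => by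
    simpa only [zero_sub] using HahnSeries.hasFiniteSupport_coeff_mul_coeff_sub (F j) (G j) 0).symm

theorem zpow_ne_one_of_norm_lt_one {𝕜 : Type*} [NormedDivisionRing 𝕜] {q : 𝕜} (hq : ‖q‖ < 1)
    {k : ℤ} (hk : k ≠ 0) : q ^ k ≠ 1 := by
  intro h
  have : ‖q‖ ^ k = 1 := by rw [← norm_zpow, h, norm_one]
  exact hk ((zpow_eq_one_iff_right₀ (norm_nonneg q) hq.ne).mp this)

section CyclicSystem

open Fin.NatCast Finset

variable (q : ℂ) {n : ℕ} [NeZero n] (G : Fin n → LaurentSeries ℂ)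

theorem sum_coeff_zero_half_add_htau_mul_dil (g : LaurentSeries ℂ) :
    ∑ j : Fin n, ((2⁻¹ : ℂ) • (G j + htau q G j)).coeff 0 * (dil q (-((j : ℕ) : ℤ)) g).coeff 0
      = g.coeff 0 * ∑ j, Res (G j) := by
  have hshift : ∑ j, (G (j + 1)).coeff 0 = ∑ j, (G j).coeff 0 :=
    Fintype.sum_equiv (Equiv.addRight 1) _ _ fun _ => rfl
  simp only [HahnSeries.coeff_smul, HahnSeries.coeff_add, htau_coeff, dil_coeff,
    mul_zero, neg_zero, zpow_zero, one_mul, smul_eq_mul, ← sum_mul, ← mul_sum, sum_add_distrib,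
    hshift, Res]
  ring

noncomputable def untwistedCoeff (i : ℤ) (k : ℕ) : ℂ := q ^ (-(k * i)) * (G k).coeff i

variable {q} {i : ℤ}

theorem untwistedCoeff_succ (hq : q ≠ 0) (k : ℕ) :
    untwistedCoeff q G i (k + 1) = q ^ (-(k * i)) * (q ^ (-i) * (G ((k : Fin n) + 1)).coeff i) := by
  rw [untwistedCoeff, ← mul_assoc, ← zpow_add₀ hq]
  push_cast
  ring_nf

theorem coeff_sub_mul_coeff_succ {f : LaurentSeries ℂ}
    (hG : ∀ j, G j - htau q G j = dil q (-((j : ℕ) : ℤ)) f - Res f • (1 : LaurentSeries ℂ))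
    (hi : i ≠ 0) (j : Fin n) :
    (G j).coeff i - q ^ (-i) * (G (j + 1)).coeff i = q ^ ((j : ℕ) * i) * f.coeff i := by
  simpa only [HahnSeries.coeff_sub, htau_coeff, dil_coeff, HahnSeries.coeff_smul,
    HahnSeries.coeff_one, if_neg hi, smul_eq_mul, mul_zero, sub_zero, neg_mul, neg_neg] using
    congrArg (HahnSeries.coeff · i) (hG j)

theorem untwistedCoeff_sub_succ (hq : q ≠ 0) {c : ℂ}
    (hrec : ∀ j : Fin n, (G j).coeff i - q ^ (-i) * (G (j + 1)).coeff i = q ^ ((j : ℕ) * i) * c) :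
    ∀ k < n, untwistedCoeff q G i k - untwistedCoeff q G i (k + 1) = c := by
  intro k hk
  have hk' := hrec (k : Fin n)
  rw [Fin.val_cast_of_lt hk] at hk'
  rw [untwistedCoeff_succ G hq, untwistedCoeff, ← mul_sub, hk', ← mul_assoc, ← zpow_add₀ hq,
    neg_add_cancel, zpow_zero, one_mul]

theorem untwistedCoeff_self :
    untwistedCoeff q G i n = q ^ (-(n * i)) * untwistedCoeff q G i 0 := by
  simp only [untwistedCoeff, Fin.natCast_self, Nat.cast_zero, zero_mul, neg_zero, zpow_zero,
    one_mul]

theorem sum_coeff_half_add_htau_mul_dil_eq_sum_untwistedCoeff (hq : q ≠ 0) (g : LaurentSeries ℂ) :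
    ∑ j : Fin n, ((2⁻¹ : ℂ) • (G j + htau q G j)).coeff i * (dil q (-((j : ℕ) : ℤ)) g).coeff (-i)
      = 2⁻¹ * g.coeff (-i) *
          ∑ k ∈ range n, (untwistedCoeff q G i k + untwistedCoeff q G i (k + 1)) := by
  rw [mul_sum, ← Fin.sum_univ_eq_sum_range]
  refine sum_congr rfl fun j _ => ?_
  rw [untwistedCoeff_succ G hq, untwistedCoeff, Fin.cast_val_eq_self]
  simp only [HahnSeries.coeff_smul, HahnSeries.coeff_add, htau_coeff, dil_coeff, smul_eq_mul,
    neg_mul_neg]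
  ring

theorem sum_coeff_half_add_htau_mul_dil_of_ne_one (hq : q ≠ 0) (hX : q ^ (-(n * i)) ≠ 1) {c : ℂ}
    (hrec : ∀ j : Fin n, (G j).coeff i - q ^ (-i) * (G (j + 1)).coeff i = q ^ ((j : ℕ) * i) * c)
    (g : LaurentSeries ℂ) :
    ∑ j : Fin n, ((2⁻¹ : ℂ) • (G j + htau q G j)).coeff i * (dil q (-((j : ℕ) : ℤ)) g).coeff (-i)
      = n ^ 2 / 2 * (c * g.coeff (-i) * ((1 + q ^ (-(n * i))) / (1 - q ^ (-(n * i))))) := by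
  have key := one_sub_mul_sum_range_add_succ_of_sub_succ_eq (untwistedCoeff_sub_succ G hq hrec)
    (untwistedCoeff_self G)
  rw [sum_coeff_half_add_htau_mul_dil_eq_sum_untwistedCoeff G hq,
    eq_div_of_mul_eq (sub_ne_zero.mpr hX.symm) ((mul_comm _ _).trans key)]
  ring

end CyclicSystem

/-- Theorem 2.4: the `U_n`-block of the regularized Cayley operator
`r̂⁰_{0,n} = ½(1+ĥτ̂_n)(1−ĥτ̂_n)⁻¹ P₀'` equals `(n/2)(1+ĥⁿ)(1−ĥⁿ)⁻¹ P₀'`.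
Here `f̄, ḡ ∈ U_n` are the tuples associated to `f, g ∈ ℂ((z⁻¹))`, and `G` is the
regularized preimage of `f̄ − (Res f)·𝟙` under `1 − ĥτ̂_n` normalized by
`∑_j Res G_j = 0`; the Laurent coefficient `f_m` of `z^m` is `f.coeff (-m)`. -/
theorem rmatrix_Un_block (n : ℕ) [NeZero n] (q : ℂ)
    (hq0 : 0 < ‖q‖) (hq1 : ‖q‖ < 1)
    (f g : LaurentSeries ℂ)
    (fbar gbar : Fin n → LaurentSeries ℂ)
    (hf : ∀ j : Fin n, fbar j = dil q (-((j : ℕ) : ℤ)) f)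
    (hg : ∀ j : Fin n, gbar j = dil q (-((j : ℕ) : ℤ)) g)
    (G : Fin n → LaurentSeries ℂ)
    (hG1 : ∀ j, G j - htau q G j = fbar j - (Res f) • (1 : LaurentSeries ℂ))
    (hG2 : ∑ j, Res (G j) = 0) :
    {m : ℤ | m ≠ 0 ∧
        f.coeff (-m) * g.coeff m * ((1 + q ^ (m * (n : ℤ))) / (1 - q ^ (m * (n : ℤ)))) ≠ 0}.Finite ∧
    pair (fun j => (2⁻¹ : ℂ) • (G j + htau q G j)) gbar
      = ((n : ℂ) ^ 2 / 2) *
          ∑ᶠ (m : ℤ) (_ : m ≠ 0),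
            f.coeff (-m) * g.coeff m * ((1 + q ^ (m * (n : ℤ))) / (1 - q ^ (m * (n : ℤ)))) := by
  set F : ℤ → ℂ := fun m =>
    f.coeff (-m) * g.coeff m * ((1 + q ^ (m * (n : ℤ))) / (1 - q ^ (m * (n : ℤ))))
  have hq : q ≠ 0 := norm_pos_iff.mp hq0
  have hG : ∀ j, G j - htau q G j = dil q (-((j : ℕ) : ℤ)) f - Res f • 1 := fun j =>
    hf j ▸ hG1 j
  have hcoeff (i : ℤ) :
      ∑ j, ((2⁻¹ : ℂ) • (G j + htau q G j)).coeff i * (gbar j).coeff (-i)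
        = n ^ 2 / 2 * ∑ᶠ (_ : -i ≠ 0), F (-i) := by
    simp only [hg]
    rcases eq_or_ne i 0 with rfl | hi
    · rw [neg_zero, sum_coeff_zero_half_add_htau_mul_dil, hG2]
      simp
    · have hX : q ^ (-(n * i)) ≠ 1 := zpow_ne_one_of_norm_lt_one hq1
        (neg_ne_zero.mpr (mul_ne_zero (Nat.cast_ne_zero.mpr (NeZero.ne n)) hi))
      rw [sum_coeff_half_add_htau_mul_dil_of_ne_one G hq hX (coeff_sub_mul_coeff_succ G hG hi),
        finsum_eq_if, if_pos (neg_ne_zero.mpr hi)]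
      simp only [F, neg_neg, neg_mul, mul_comm i]
  refine ⟨(HahnSeries.hasFiniteSupport_coeff_mul_coeff_sub g f 0).subset fun m hm => ?_, ?_⟩
  · simpa only [Function.mem_support, zero_sub, mul_comm (g.coeff m)] using
      left_ne_zero_of_mul hm.2
  · rw [pair_eq_finsum_sum, finsum_congr hcoeff, ← mul_finsum]
    exact congrArg _ (finsum_comp_equiv (Equiv.neg ℤ) (f := fun m => ∑ᶠ (_ : m ≠ 0), F m))
end

section
/- Let n ≥ 1 and q ∈ ℂ with 0 < |q| < 1. Let 𝕃 = Λ_n + A, where Λ_n is the n×n matrix over ℂ((z⁻¹)) with entries 1 on the first subdiagonal ((Λ_n)_{i+1,i} = 1) and 0 elsewhere, and A is an arbitrary upper triangular n×n matrix over ℂ((z⁻¹)). Then there exists a unique unipotent upper triangular matrix S over ℂ((z⁻¹)) (S_{ii} = 1, S_{ij} = 0 for i > j) such that (ĥS)·𝕃·S⁻¹ is a companion matrix, i.e. has first row (−u_1,…,−u_n) for some u_1,…,u_n ∈ ℂ((z⁻¹)), entries 1 on the first subdiagonal, and 0 elsewhere; here ĥS denotes the matrix obtained by applying the dilation ĥ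 to each entry of S. (Theorem 2.1: the gauge action of the unipotent loop group on Y_n is free and the companion matrices form a cross-section.) -/
/-!
Since `S` is invertible, `(ĥS)·𝕃·S⁻¹ = C` means `(ĥS)·𝕃 = C·S`, and for `i ≥ 1` row `i` of `C·S`
is row `i - 1` of `S`. So the companion condition says exactly that row `i - 1` of `S` is
`(ĥSᵢ)·𝕃` for every `i ≥ 1`, while the first row of the gauge transform is free and supplies `u`.
The last row of a unipotent upper triangular `S` is `eₙ`, so all rows are forced, which gives
uniqueness. Conversely, multiplying a row whose leading entry `1` sits at position `p` by
`Λₙ + A` with `A` upper triangular gives a row with leading `1` at position `p - 1`, so the rows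
generated from `eₙ` form a unipotent upper triangular matrix.
-/

open Matrix

lemma dil_zero (q : ℂ) (k : ℤ) : dil q k 0 = 0 := by
  ext j
  simp [dil]

lemma dil_one (q : ℂ) (k : ℤ) : dil q k 1 = 1 := by
  ext j
  by_cases h : j = 0 <;> simp [dil, HahnSeries.coeff_one, h]

lemma isUnit_det_of_isUpperTriangular_of_diag_eq_one {ι R : Type*} [Fintype ι] [DecidableEq ι]
    [LinearOrder ι] [CommRing R] {T : Matrix ι ι R} (hdiag : ∀ i, T i i = 1)
    (htri : T.IsUpperTriangular) : IsUnit T.det := by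
  simp [det_of_isUpperTriangular htri, hdiag]

section Gauge

variable {R : Type*} [CommRing R] {n : ℕ}

def subdiagonalShift : Matrix (Fin n) (Fin n) R :=
  Matrix.of fun i j => if (i : ℕ) = (j : ℕ) + 1 then 1 else 0

def companionMatrix (u : Fin n → R) : Matrix (Fin n) (Fin n) R :=
  Matrix.of fun i j => if (i : ℕ) = 0 then -u j else if (i : ℕ) = (j : ℕ) + 1 then 1 else 0

lemma vecMul_subdiagonalShift_apply (w : Fin n → R) (j : Fin n) :
    (w ᵥ* subdiagonalShift) j = if h : (j : ℕ) + 1 < n then w ⟨j + 1, h⟩ else 0 := by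
  simp only [vecMul, dotProduct, subdiagonalShift, of_apply, mul_ite, mul_one, mul_zero]
  split_ifs with h
  · rw [Finset.sum_eq_single ⟨j + 1, h⟩ (fun k _ hk => if_neg fun hk' => hk (Fin.ext hk'))
      (by simp), if_pos rfl]
  · exact Finset.sum_eq_zero fun k _ => if_neg (by omega)

lemma companionMatrix_mul_apply_of_eq_succ (u : Fin n → R) (T : Matrix (Fin n) (Fin n) R)
    {i i' : Fin n} (h : (i : ℕ) = i' + 1) : (companionMatrix u * T) i = T i' := by
  ext j
  rw [mul_apply, Finset.sum_eq_single i' (fun k _ hk => ?_) (by simp)]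
  · simp [companionMatrix, h]
  · simp [companionMatrix, h, Fin.ext_iff] at hk ⊢
    omega

variable (σ : R → R) (L : Matrix (Fin n) (Fin n) R)

/-- `gaugeRow σ L m` is row `n - 1 - m` of the gauge. -/
def gaugeRow : ℕ → Fin n → R
  | 0 => fun j => if (j : ℕ) = n - 1 then 1 else 0
  | m + 1 => (σ ∘ gaugeRow m) ᵥ* L

def gaugeMatrix : Matrix (Fin n) (Fin n) R :=
  Matrix.of fun i => gaugeRow σ L (n - 1 - i)

lemma vecMul_gaugeMatrix_row {i i' : Fin n} (h : (i : ℕ) = i' + 1) :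
    (σ ∘ gaugeMatrix σ L i) ᵥ* L = gaugeMatrix σ L i' := by
  show (σ ∘ gaugeRow σ L (n - 1 - i)) ᵥ* L = gaugeRow σ L (n - 1 - i')
  rw [show n - 1 - (i' : ℕ) = n - 1 - i + 1 by omega]
  rfl

theorem exists_companionMatrix_iff {T : Matrix (Fin n) (Fin n) R} (hT : IsUnit T.det) :
    (∃ u, T.map σ * L * T⁻¹ = companionMatrix u) ↔
      ∀ i i' : Fin n, (i : ℕ) = i' + 1 → (σ ∘ T i) ᵥ* L = T i' := by
  constructor
  · rintro ⟨u, hu⟩ i i' h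
    have hgauge : T.map σ * L = companionMatrix u * T := by
      rw [← hu, nonsing_inv_mul_cancel_right _ _ hT]
    rw [← companionMatrix_mul_apply_of_eq_succ u T h, ← hgauge]
    rfl
  · intro hrow
    refine ⟨fun j => -(T.map σ * L * T⁻¹) ⟨0, j.pos⟩ j, ?_⟩
    ext i j
    by_cases hi : (i : ℕ) = 0
    · obtain rfl : i = ⟨0, j.pos⟩ := Fin.ext hi
      simp [companionMatrix]
    · obtain ⟨i', hi'⟩ : ∃ i' : Fin n, (i : ℕ) = i' + 1 :=
        ⟨⟨i - 1, by omega⟩, by simp; omega⟩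
      have hrow_i : (T.map σ * L * T⁻¹) i = (T * T⁻¹) i' := by
        rw [mul_apply_eq_vecMul, show (T.map σ * L) i = T i' from hrow i i' hi',
          ← mul_apply_eq_vecMul]
      rw [hrow_i, mul_nonsing_inv _ hT]
      simp [companionMatrix, one_apply, hi', Fin.ext_iff]

theorem eq_gaugeMatrix {T : Matrix (Fin n) (Fin n) R} (hdiag : ∀ i, T i i = 1)
    (htri : T.IsUpperTriangular)
    (hrow : ∀ i i' : Fin n, (i : ℕ) = i' + 1 → (σ ∘ T i) ᵥ* L = T i') :
    T = gaugeMatrix σ L := by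
  have hbottom : ∀ m (hm : m < n), T ⟨n - 1 - m, by omega⟩ = gaugeRow σ L m := by
    intro m hm
    induction m with
    | zero =>
      funext j
      simp only [gaugeRow]
      split_ifs with hj
      · rw [show j = ⟨n - 1 - 0, by omega⟩ from Fin.ext (by simp [hj])]
        exact hdiag _
      · exact htri (Fin.lt_def.2 (by simp; omega) : j < ⟨n - 1 - 0, by omega⟩)
    | succ m ih =>
      rw [← hrow ⟨n - 1 - m, by omega⟩ _ (by simp; omega), ih (by omega)]
      rfl
  ext i j
  have hi := hbottom (n - 1 - i) (by omega)
  rw [show (⟨n - 1 - (n - 1 - i), by omega⟩ : Fin n) = i from Fin.ext (by simp; omega)] at hi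
  exact congrFun hi j

variable {σ}

theorem gaugeRow_apply_of_le (hσ0 : σ 0 = 0) (hσ1 : σ 1 = 1) {A : Matrix (Fin n) (Fin n) R}
    (hA : A.IsUpperTriangular) {m : ℕ} (hm : m < n) {j : Fin n} (hj : (j : ℕ) ≤ n - 1 - m) :
    gaugeRow σ (subdiagonalShift + A) m j = if (j : ℕ) = n - 1 - m then 1 else 0 := by
  induction m generalizing j with
  | zero => simp [gaugeRow]
  | succ m ih =>
    set v := gaugeRow σ (subdiagonalShift + A) m
    have hv : ∀ k : Fin n, (k : ℕ) ≤ n - 1 - m →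
        σ (v k) = if (k : ℕ) = n - 1 - m then 1 else 0 := by
      intro k hk
      rw [ih (by omega) hk]
      split_ifs <;> assumption
    have hA_part : ((σ ∘ v) ᵥ* A) j = 0 := by
      rw [vecMul, dotProduct]
      refine Finset.sum_eq_zero fun k _ => ?_
      rcases le_or_gt k j with hkj | hjk
      · rw [Function.comp_apply, hv k (by rw [Fin.le_def] at hkj; omega), if_neg (by omega),
          zero_mul]
      · rw [hA hjk, mul_zero]
    change ((σ ∘ v) ᵥ* (subdiagonalShift + A)) j = _
    rw [vecMul_add, Pi.add_apply, hA_part, add_zero, vecMul_subdiagonalShift_apply,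
      dif_pos (by omega), Function.comp_apply, hv _ (by simp; omega)]
    exact if_congr (by dsimp only; omega) rfl rfl

theorem gaugeMatrix_apply_of_le (hσ0 : σ 0 = 0) (hσ1 : σ 1 = 1)
    {A : Matrix (Fin n) (Fin n) R} (hA : A.IsUpperTriangular) {i j : Fin n} (hji : j ≤ i) :
    gaugeMatrix σ (subdiagonalShift + A) i j = if j = i then 1 else 0 := by
  rw [gaugeMatrix, of_apply, gaugeRow_apply_of_le hσ0 hσ1 hA (by omega) (by omega)]
  exact if_congr (by rw [Fin.ext_iff]; omega) rfl rfl

end Gauge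

theorem cross_section_general (n : ℕ) (q : ℂ)
    (A : Matrix (Fin n) (Fin n) (LaurentSeries ℂ))
    (hA : ∀ i j : Fin n, j < i → A i j = 0)
    (Λ : Matrix (Fin n) (Fin n) (LaurentSeries ℂ))
    (hΛ : ∀ i j : Fin n, Λ i j = if (i : ℕ) = (j : ℕ) + 1 then 1 else 0) :
    ∃! S : Matrix (Fin n) (Fin n) (LaurentSeries ℂ),
      (∀ i, S i i = 1) ∧ (∀ i j : Fin n, j < i → S i j = 0) ∧
      ∃ u : Fin n → LaurentSeries ℂ,
        ∀ i j : Fin n,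
          (S.map (dil q 1) * (Λ + A) * S⁻¹) i j
            = if (i : ℕ) = 0 then -u j else if (i : ℕ) = (j : ℕ) + 1 then 1 else 0 := by
  obtain rfl : Λ = subdiagonalShift := Matrix.ext hΛ
  have hA' : A.IsUpperTriangular := fun i j h => hA i j h
  have hdiag : ∀ i, gaugeMatrix (dil q 1) (subdiagonalShift + A) i i = 1 := fun i =>
    (gaugeMatrix_apply_of_le (dil_zero q 1) (dil_one q 1) hA' le_rfl).trans (if_pos rfl)
  have htri : ∀ i j : Fin n, j < i → gaugeMatrix (dil q 1) (subdiagonalShift + A) i j = 0 :=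
    fun i j h => (gaugeMatrix_apply_of_le (dil_zero q 1) (dil_one q 1) hA' h.le).trans (if_neg h.ne)
  refine ⟨_, ⟨hdiag, htri, ?_⟩, ?_⟩
  · have hS := isUnit_det_of_isUpperTriangular_of_diag_eq_one hdiag htri
    obtain ⟨u, hu⟩ :=
      (exists_companionMatrix_iff _ _ hS).2 fun _ _ => vecMul_gaugeMatrix_row _ _
    exact ⟨u, fun i j => congrFun (congrFun hu i) j⟩
  · rintro T ⟨hdiagT, htriT, u, hu⟩
    have hT := isUnit_det_of_isUpperTriangular_of_diag_eq_one hdiagT htriT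
    exact eq_gaugeMatrix _ _ hdiagT htriT
      ((exists_companionMatrix_iff _ _ hT).1 ⟨u, Matrix.ext hu⟩)

/-- Theorem 2.1 (cross-section theorem): for every matrix `𝕃 = Λ_n + A` with `A`
upper triangular over `ℂ((z⁻¹))`, there is a unique unipotent upper triangular
matrix `S` such that the gauge transform `(ĥS)·𝕃·S⁻¹` is a companion matrix. -/
theorem cross_section (n : ℕ) (hn : 1 ≤ n) (q : ℂ)
    (hq0 : 0 < ‖q‖) (hq1 : ‖q‖ < 1)
    (A : Matrix (Fin n) (Fin n) (LaurentSeries ℂ))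
    (hA : ∀ i j : Fin n, j < i → A i j = 0)
    (Λ : Matrix (Fin n) (Fin n) (LaurentSeries ℂ))
    (hΛ : ∀ i j : Fin n, Λ i j = if (i : ℕ) = (j : ℕ) + 1 then 1 else 0) :
    ∃! S : Matrix (Fin n) (Fin n) (LaurentSeries ℂ),
      (∀ i, S i i = 1) ∧ (∀ i j : Fin n, j < i → S i j = 0) ∧
      ∃ u : Fin n → LaurentSeries ℂ,
        ∀ i j : Fin n,
          (S.map (dil q 1) * (Λ + A) * S⁻¹) i j
            = if (i : ℕ) = 0 then -u j else if (i : ℕ) = (j : ℕ) + 1 then 1 else 0 :=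
  cross_section_general n q A hA Λ hΛ
end

section
/- Let n ≥ 1 and q ∈ ℂ with 0 < |q| < 1. For the operator 1 − ĥτ̂_n on H_n: (1) its kernel is ℂ·𝟙, the one-dimensional space of constant tuples (c,…,c), c ∈ ℂ; (2) its image is exactly {F ∈ H_n : Σ_{j=0}^{n−1} Res F_j = 0}. (Remark 2.2.) -/
/-!
Everything happens coefficientwise. The `z^m`-coefficients of `(1 - ĥτ̂_n) F` are obtained from
the coefficient vector `v = ((F j).coeff m)_j ∈ ℂⁿ` by the cyclic difference operator
`v ↦ (v j - c * v (j + 1))_j` with `c = q^(-m)`. For `m ≠ 0` we have `c ^ n ≠ 1` because `‖q‖ ≠ 1`,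
and iterating the relation `v j = c * v (j + 1)` around the cycle shows the operator is injective,
hence bijective on `ℂⁿ`. For `m = 0` (`c = 1`) its kernel is the constant vectors, so by
rank–nullity its image is a hyperplane, contained in and hence equal to `{∑ j, v j = 0}`.
Preimages chosen coefficientwise, with `0` over `0`, are supported where `F` is, so they
assemble into Laurent series.
-/

open Fin.NatCast

section CyclicDiff

variable {K : Type*} [Field K] {n : ℕ}

def coordSum : (Fin n → K) →ₗ[K] K := ∑ j, LinearMap.proj j

lemma coordSum_apply (v : Fin n → K) : coordSum v = ∑ j, v j := by
  simp [coordSum]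

variable [NeZero n]

def cyclicDiff (c : K) : (Fin n → K) →ₗ[K] (Fin n → K) :=
  LinearMap.id - c • LinearMap.funLeft K K (· + 1)

@[simp] lemma cyclicDiff_apply (c : K) (v : Fin n → K) (j : Fin n) :
    cyclicDiff c v j = v j - c * v (j + 1) := rfl

lemma eq_pow_mul_of_cyclicDiff_eq_zero {c : K} {v : Fin n → K} (hv : cyclicDiff c v = 0)
    (j : Fin n) :
    ∀ k : ℕ, v j = c ^ k * v (j + k)
  | 0 => by simp
  | k + 1 => by
    have step : v (j + k) = c * v (j + k + 1) := sub_eq_zero.mp (congrFun hv (j + k))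
    rw [eq_pow_mul_of_cyclicDiff_eq_zero hv j k, step, Nat.cast_succ, add_assoc, pow_succ,
      mul_assoc]

lemma cyclicDiff_injective {c : K} (hc : c ^ n ≠ 1) :
    Function.Injective (cyclicDiff (n := n) c) := by
  refine (injective_iff_map_eq_zero _).mpr fun v hv => funext fun j => ?_
  have h := eq_pow_mul_of_cyclicDiff_eq_zero hv j n
  rw [Fin.natCast_self, add_zero] at h
  by_contra hne
  exact hc ((mul_eq_right₀ hne).mp h.symm)

lemma cyclicDiff_surjective {c : K} (hc : c ^ n ≠ 1) :
    Function.Surjective (cyclicDiff (n := n) c) :=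
  LinearMap.injective_iff_surjective.mp (cyclicDiff_injective hc)

lemma cyclicDiff_one_eq_zero_iff {v : Fin n → K} : cyclicDiff 1 v = 0 ↔ ∃ a, v = fun _ => a := by
  refine ⟨fun hv => ⟨v 0, funext fun j => ?_⟩, ?_⟩
  · simpa using (eq_pow_mul_of_cyclicDiff_eq_zero hv 0 j).symm
  · rintro ⟨a, rfl⟩
    ext; simp

lemma range_cyclicDiff_one_le :
    LinearMap.range (cyclicDiff (n := n) (1 : K)) ≤ LinearMap.ker coordSum := by
  rintro _ ⟨w, rfl⟩
  simp only [LinearMap.mem_ker, coordSum_apply, cyclicDiff_apply, one_mul,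
    Finset.sum_sub_distrib]
  exact sub_eq_zero.mpr (Equiv.sum_comp (Equiv.addRight 1) w).symm

lemma finrank_range_cyclicDiff_one :
    Module.finrank K (LinearMap.range (cyclicDiff (n := n) (1 : K))) = n - 1 := by
  have hker : LinearMap.ker (cyclicDiff (n := n) (1 : K)) = K ∙ (fun _ => 1) := by
    ext v
    simp only [LinearMap.mem_ker, cyclicDiff_one_eq_zero_iff, Submodule.mem_span_singleton]
    constructor <;> rintro ⟨a, rfl⟩ <;> exact ⟨a, by ext; simp⟩
  have := LinearMap.finrank_range_add_finrank_ker (cyclicDiff (n := n) (1 : K))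
  rw [hker, finrank_span_singleton fun h => one_ne_zero (congrFun h 0),
    Module.finrank_fin_fun] at this
  omega

lemma finrank_ker_coordSum :
    Module.finrank K (LinearMap.ker (coordSum (K := K) (n := n))) = n - 1 := by
  have hsurj : LinearMap.range (coordSum (K := K) (n := n)) = ⊤ :=
    LinearMap.range_eq_top.mpr fun a => ⟨Pi.single 0 a, by simp [coordSum_apply]⟩
  have := LinearMap.finrank_range_add_finrank_ker (coordSum (K := K) (n := n))
  rw [hsurj, finrank_top, Module.finrank_self, Module.finrank_fin_fun] at this
  omega

lemma range_cyclicDiff_one :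
    LinearMap.range (cyclicDiff (n := n) (1 : K)) = LinearMap.ker coordSum :=
  Submodule.eq_of_le_of_finrank_eq range_cyclicDiff_one_le
    (by rw [finrank_range_cyclicDiff_one, finrank_ker_coordSum])

end CyclicDiff

lemma HahnSeries.exists_coeff_eq_of_support_subset {Γ R ι : Type*} [PartialOrder Γ] [Zero R]
    [Fintype ι] (F : ι → HahnSeries Γ R) {g : Γ → R} (hg : g.support ⊆ ⋃ i, (F i).support) :
    ∃ G : HahnSeries Γ R, G.coeff = g :=
  ⟨⟨g, ((Finset.univ.isPWO_bUnion).mpr fun i _ => (F i).isPWO_support).mono (by simpa using hg)⟩,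
    rfl⟩

section LaurentTuples

variable {q : ℂ} {n : ℕ} [NeZero n]

lemma coeff_sub_htau (F : Fin n → LaurentSeries ℂ) (j : Fin n) (m : ℤ) :
    (F j - htau q F j).coeff m = cyclicDiff (q ^ (-m)) (fun k => (F k).coeff m) j := by
  simp [htau, dil]

lemma zpow_neg_pow_ne_one (hq1 : ‖q‖ < 1) {m : ℤ} (hm : m ≠ 0) : (q ^ (-m)) ^ n ≠ 1 := by
  intro h
  have h' : ‖q‖ ^ (-m * n) = 1 := by rw [← norm_zpow, zpow_mul, zpow_natCast, h, norm_one]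
  rw [zpow_eq_one_iff_right₀ (norm_nonneg q) hq1.ne] at h'
  simp_all [NeZero.ne n]

lemma sub_htau_eq_zero_iff (hq1 : ‖q‖ < 1) (F : Fin n → LaurentSeries ℂ) :
    (∀ j, F j - htau q F j = 0) ↔ ∃ c : ℂ, ∀ j, F j = c • (1 : LaurentSeries ℂ) := by
  constructor
  · intro h
    have hcoeff (m : ℤ) : cyclicDiff (q ^ (-m)) (fun k => (F k).coeff m) = 0 :=
      funext fun j => by rw [← coeff_sub_htau, h j]; rfl
    obtain ⟨c, hc⟩ := cyclicDiff_one_eq_zero_iff.mp (by simpa using hcoeff 0)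
    refine ⟨c, fun j => HahnSeries.ext (funext fun m => ?_)⟩
    rcases eq_or_ne m 0 with rfl | hm
    · simpa using congrFun hc j
    · have hzero := (injective_iff_map_eq_zero _).mp
        (cyclicDiff_injective (zpow_neg_pow_ne_one hq1 hm)) _ (hcoeff m)
      simpa [hm] using congrFun hzero j
  · rintro ⟨c, hc⟩ j
    ext m
    rw [coeff_sub_htau]
    rcases eq_or_ne m 0 with rfl | hm
    · simp [hc]
    · simp [hc, hm]

lemma exists_cyclicDiff_zpow_neg_eq (hq1 : ‖q‖ < 1) (m : ℤ) {v : Fin n → ℂ}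
    (hv : m = 0 → ∑ j, v j = 0) :
    ∃ w, cyclicDiff (q ^ (-m)) w = v ∧ (v = 0 → w = 0) := by
  by_cases h0 : v = 0
  · exact ⟨0, by simp [h0], fun _ => rfl⟩
  obtain ⟨w, hw⟩ : ∃ w, cyclicDiff (q ^ (-m)) w = v := by
    rcases eq_or_ne m 0 with rfl | hm
    · have hmem : v ∈ LinearMap.range (cyclicDiff (1 : ℂ)) := by
        rw [range_cyclicDiff_one, LinearMap.mem_ker, coordSum_apply]
        exact hv rfl
      simpa using hmem
    · exact cyclicDiff_surjective (zpow_neg_pow_ne_one hq1 hm) v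
  exact ⟨w, hw, fun h => absurd h h0⟩

lemma exists_sub_htau_eq_iff (hq1 : ‖q‖ < 1) (F : Fin n → LaurentSeries ℂ) :
    (∃ G : Fin n → LaurentSeries ℂ, ∀ j, F j = G j - htau q G j) ↔ ∑ j, Res (F j) = 0 := by
  constructor
  · rintro ⟨G, hG⟩
    have hres (j : Fin n) : Res (F j) = cyclicDiff 1 (fun k => (G k).coeff 0) j := by
      rw [Res, hG j, coeff_sub_htau, neg_zero, zpow_zero]
    simp_rw [hres, ← coordSum_apply]
    exact range_cyclicDiff_one_le ⟨_, rfl⟩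
  · intro hsum
    choose w hw hw0 using fun m =>
      exists_cyclicDiff_zpow_neg_eq (v := fun k => (F k).coeff m) hq1 m (by rintro rfl; exact hsum)
    have hsupp (j : Fin n) : (fun m => w m j).support ⊆ ⋃ k, (F k).support := by
      intro m hm
      by_contra hF
      simp only [Set.mem_iUnion, HahnSeries.mem_support, not_exists, not_not] at hF
      exact hm (congrFun (hw0 m (funext hF)) j)
    choose G hG using fun j => HahnSeries.exists_coeff_eq_of_support_subset F (hsupp j)
    refine ⟨G, fun j => HahnSeries.ext (funext fun m => ?_)⟩
    rw [coeff_sub_htau]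
    simp only [hG, hw]

end LaurentTuples

theorem kernel_and_image_general (n : ℕ) [NeZero n] (q : ℂ)
    (hq1 : ‖q‖ < 1) :
    (∀ F : Fin n → LaurentSeries ℂ,
        (∀ j, F j - htau q F j = 0) ↔ ∃ c : ℂ, ∀ j, F j = c • (1 : LaurentSeries ℂ)) ∧
    (∀ F : Fin n → LaurentSeries ℂ,
        (∃ G : Fin n → LaurentSeries ℂ, ∀ j, F j = G j - htau q G j) ↔
          ∑ j, Res (F j) = 0) :=
  ⟨sub_htau_eq_zero_iff hq1, exists_sub_htau_eq_iff hq1⟩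

/-- Remark 2.2: for the operator `1 − ĥτ̂_n` on `H_n`, the kernel is the
one-dimensional space `ℂ·𝟙` of constant tuples, and the image is exactly
`{F : ∑_j Res F_j = 0}`. -/
theorem kernel_and_image (n : ℕ) [NeZero n] (q : ℂ)
    (hq0 : 0 < ‖q‖) (hq1 : ‖q‖ < 1) :
    (∀ F : Fin n → LaurentSeries ℂ,
        (∀ j, F j - htau q F j = 0) ↔ ∃ c : ℂ, ∀ j, F j = c • (1 : LaurentSeries ℂ)) ∧
    (∀ F : Fin n → LaurentSeries ℂ,
        (∃ G : Fin n → LaurentSeries ℂ, ∀ j, F j = G j - htau q G j) ↔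
          ∑ j, Res (F j) = 0) :=
  kernel_and_image_general n q hq1
end
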